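/- Let R ∈ SO(3) with |R₃₃| ≥ ρ > 0. Then for all x ∈ R^3, |[R e₃]_× [e₃]_× x|² ≥ ρ² (x₁² + x₂²). -/

import Mathlib

open Matrix

/-- The skew-symmetric cross-product matrix of `u ∈ ℝ³`. -/
def skew (u : Fin 3 → ℝ) : Matrix (Fin 3) (Fin 3) ℝ :=
  !![0, -u 2, u 1; u 2, 0, -u 0; -u 1, u 0, 0]

/-- The third standard basis vector of `ℝ³`. -/
def e3 : Fin 3 → ℝ := ![0, 0, 1]

/-- Sum of squares of the components of a vector in `ℝ³` (the squared Euclidean norm). -/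
def sq3 (u : Fin 3 → ℝ) : ℝ := u 0 ^ 2 + u 1 ^ 2 + u 2 ^ 2

/-
Writing `v = R e₃`, the vector triple product gives
`[v]_× [e₃]_× x = v × (e₃ × x) = (v ⬝ x) e₃ - R₃₃ x`,
whose first two components are `-R₃₃ x₁` and `-R₃₃ x₂`.
-/

theorem skew_mulVec (u v : Fin 3 → ℝ) : skew u *ᵥ v = u ⨯₃ v := by
  ext i
  fin_cases i <;>
    simp only [skew, cross_apply, mulVec, dotProduct, Fin.sum_univ_three, of_apply, cons_val',
      cons_val_fin_one, cons_val_zero, cons_val_one, cons_val, Fin.reduceFinMk, Fin.zero_eta,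
      Fin.mk_one] <;>
    ring

theorem mulVec_e3_apply (A : Matrix (Fin 3) (Fin 3) ℝ) (i : Fin 3) : (A *ᵥ e3) i = A i 2 := by
  simp [e3, mulVec, dotProduct, Fin.sum_univ_three]

theorem skew_mul_skew_e3_mulVec (u x : Fin 3 → ℝ) :
    (skew u * skew e3) *ᵥ x = (u ⬝ᵥ x) • e3 - u 2 • x := by
  have hdot : e3 ⬝ᵥ u = u 2 := by simp [e3, dotProduct, Fin.sum_univ_three]
  rw [← mulVec_mulVec, skew_mulVec, skew_mulVec, cross_cross_eq_smul_sub_smul', hdot]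

theorem add_sq_le_sq3 (u : Fin 3 → ℝ) : u 0 ^ 2 + u 1 ^ 2 ≤ sq3 u := by
  unfold sq3
  nlinarith [sq_nonneg (u 2)]

theorem sq_mul_le_sq3_skew_mul_skew_e3_mulVec (u x : Fin 3 → ℝ) :
    u 2 ^ 2 * (x 0 ^ 2 + x 1 ^ 2) ≤ sq3 ((skew u * skew e3) *ᵥ x) := by
  refine le_of_eq_of_le ?_ (add_sq_le_sq3 _)
  rw [skew_mul_skew_e3_mulVec]
  simp only [e3, Pi.sub_apply, Pi.smul_apply, smul_cons, smul_eq_mul, mul_zero, smul_empty,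
    cons_val_zero, cons_val_one]
  ring

theorem stmt5_general (R : Matrix (Fin 3) (Fin 3) ℝ)
    (ρ : ℝ) (hρ : 0 < ρ) (hR33 : |R 2 2| ≥ ρ) (x : Fin 3 → ℝ) :
    sq3 ((skew (R.mulVec e3) * skew e3).mulVec x) ≥ ρ ^ 2 * (x 0 ^ 2 + x 1 ^ 2) := by
  have hρ_sq : ρ ^ 2 ≤ R 2 2 ^ 2 := by
    rw [← sq_abs (R 2 2)]
    exact pow_le_pow_left₀ hρ.le hR33 2
  calc ρ ^ 2 * (x 0 ^ 2 + x 1 ^ 2) ≤ R 2 2 ^ 2 * (x 0 ^ 2 + x 1 ^ 2) := by gcongr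
    _ ≤ _ := by
      simpa only [mulVec_e3_apply] using sq_mul_le_sq3_skew_mul_skew_e3_mulVec (R *ᵥ e3) x

/-- For `R ∈ SO(3)` with `|R₃₃| ≥ ρ > 0`:
`|[R e₃]_× [e₃]_× x|² ≥ ρ² (x₁² + x₂²)` for all `x ∈ ℝ³`. -/
theorem stmt5 (R : Matrix (Fin 3) (Fin 3) ℝ)
    (hO : Rᵀ * R = 1) (hdet : R.det = 1)
    (ρ : ℝ) (hρ : 0 < ρ) (hR33 : |R 2 2| ≥ ρ) (x : Fin 3 → ℝ) :
    sq3 ((skew (R.mulVec e3) * skew e3).mulVec x) ≥ ρ ^ 2 * (x 0 ^ 2 + x 1 ^ 2) :=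
  stmt5_general R ρ hρ hR33 x
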